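/- Let (X,d) be a metric space, f,g : X → X and F,G : X → P_fb(X) with pairs {f,F}, {g,G} occasionally weakly compatible. Let Ψ : ℝ⁺ → ℝ⁺ be nondecreasing with Ψ(t) < t for all t > 0, let 0 < a ≤ 1, 0 < α, β ≤ 1 and p ≥ 1. Suppose for all x,y ∈ X: δ^p(Fx,Gy) ≤ Ψ(a·d^p(fx,gy) + (1−a)·max{α·d^p(fx,Fx), β·d^p(gy,Gy), d^{p/2}(fx,Fx)·d^{p/2}(gy,Fx), d^{p/2}(gy,Fx)·d^{p/2}(fx,Gy), (d^p(fx,Fx)+d^p(gy,Gy))/2}). Then f, g, F, G have a unique common fixed point. -/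
import Mathlib

open Metric

/-- δ(A,B) = sup {d(a,b) : a ∈ A, b ∈ B} -/
noncomputable def setDelta {X : Type*} [MetricSpace X] (A B : Set X) : ℝ :=
  sSup {r | ∃ a ∈ A, ∃ b ∈ B, dist a b = r}

/-- The pair (f,F) is occasionally weakly compatible. -/
def OWC {X : Type*} [MetricSpace X] (f : X → X) (F : X → Set X) : Prop :=
  ∃ u, f u ∈ F u ∧ f '' F u ⊆ F (f u)

/-- F takes values in the nonempty bounded closed subsets of X. -/
def Pfb {X : Type*} [MetricSpace X] (F : X → Set X) : Prop :=
  ∀ x, (F x).Nonempty ∧ Bornology.IsBounded (F x) ∧ IsClosed (F x)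

lemma dist_le_setDelta {X : Type*} [MetricSpace X] {A B : Set X}
    (hA : Bornology.IsBounded A) (hB : Bornology.IsBounded B)
    {x y : X} (hx : x ∈ A) (hy : y ∈ B) : dist x y ≤ setDelta A B := by
  obtain ⟨C, hC⟩ := Metric.isBounded_iff.mp (hA.union hB)
  apply le_csSup
  · exact ⟨C, fun r ⟨u, hu, v, hv, hr⟩ => hr ▸ hC (Or.inl hu) (Or.inr hv)⟩
  · exact ⟨x, hx, y, hy, rfl⟩

theorem stmt12 {X : Type*} [MetricSpace X] (f g : X → X) (F G : X → Set X)
    (hF : Pfb F) (hG : Pfb G) (howc1 : OWC f F) (howc2 : OWC g G)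
    (Ψ : ℝ → ℝ) (hΨ0 : ∀ t, 0 ≤ t → 0 ≤ Ψ t)
    (hΨmono : ∀ s t, 0 ≤ s → s ≤ t → Ψ s ≤ Ψ t) (hΨ : ∀ t : ℝ, 0 < t → Ψ t < t)
    (a α β : ℝ) (ha0 : 0 < a) (ha1 : a ≤ 1) (hα0 : 0 < α) (hα1 : α ≤ 1)
    (hβ0 : 0 < β) (hβ1 : β ≤ 1) (p : ℝ) (hp : 1 ≤ p)
    (hcontr : ∀ x y : X,
      (setDelta (F x) (G y)) ^ p ≤
        Ψ (a * (dist (f x) (g y)) ^ p + (1 - a) *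
          max (α * (infDist (f x) (F x)) ^ p)
           (max (β * (infDist (g y) (G y)) ^ p)
            (max ((infDist (f x) (F x)) ^ (p / 2) * (infDist (g y) (F x)) ^ (p / 2))
             (max ((infDist (g y) (F x)) ^ (p / 2) * (infDist (f x) (G y)) ^ (p / 2))
              (((infDist (f x) (F x)) ^ p + (infDist (g y) (G y)) ^ p) / 2)))))) :
    ∃! w : X, f w = w ∧ g w = w ∧ w ∈ F w ∧ w ∈ G w := by
  have hp0 : (0:ℝ) < p := lt_of_lt_of_le one_pos hp
  -- key collapsing lemma
  have key : ∀ x y : X, f x ∈ F x → g y ∈ G y →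
      ∀ z ∈ F x, ∀ z' ∈ G y, z = z' := by
    intro x y hx hy
    set D := setDelta (F x) (G y) with hD
    have hFb := (hF x).2.1
    have hGb := (hG y).2.1
    have hdle : ∀ z ∈ F x, ∀ z' ∈ G y, dist z z' ≤ D :=
      fun z hz z' hz' => dist_le_setDelta hFb hGb hz hz'
    have hD0 : 0 ≤ D := le_trans dist_nonneg (hdle _ hx _ hy)
    have hDzero : D = 0 := by
      by_contra hne
      have hDpos : 0 < D := lt_of_le_of_ne hD0 (Ne.symm hne)
      have hDp : (0:ℝ) < D ^ p := Real.rpow_pos_of_pos hDpos p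
      have h1 : infDist (f x) (F x) = 0 := infDist_zero_of_mem hx
      have h2 : infDist (g y) (G y) = 0 := infDist_zero_of_mem hy
      have h3 : infDist (g y) (F x) ≤ D := by
        refine le_trans (infDist_le_dist_of_mem hx) ?_
        rw [dist_comm]; exact hdle _ hx _ hy
      have h4 : infDist (f x) (G y) ≤ D := le_trans (infDist_le_dist_of_mem hy) (hdle _ hx _ hy)
      have hz : (0:ℝ) ^ p = 0 := Real.zero_rpow (ne_of_gt hp0)
      have hz2 : (0:ℝ) ^ (p/2) = 0 := Real.zero_rpow (by positivity)
      have hdxy : dist (f x) (g y) ≤ D := hdle _ hx _ hy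
      have hc := hcontr x y
      rw [h1, h2, hz, hz2] at hc
      -- bound the max term
      have ht4 : (infDist (g y) (F x)) ^ (p/2) * (infDist (f x) (G y)) ^ (p/2) ≤ D ^ p := by
        have e : D ^ p = D ^ (p/2) * D ^ (p/2) := by
          rw [← Real.rpow_add hDpos]; ring_nf
        rw [e]
        exact mul_le_mul (Real.rpow_le_rpow infDist_nonneg h3 (by positivity))
          (Real.rpow_le_rpow infDist_nonneg h4 (by positivity))
          (Real.rpow_nonneg infDist_nonneg _) (Real.rpow_nonneg hD0 _)
      have hM : max (α * 0) (max (β * 0)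
          (max (0 * (infDist (g y) (F x)) ^ (p / 2))
           (max ((infDist (g y) (F x)) ^ (p / 2) * (infDist (f x) (G y)) ^ (p / 2))
            ((0 + 0) / 2)))) ≤ D ^ p := by
        apply max_le (by nlinarith)
        apply max_le (by nlinarith)
        apply max_le (by nlinarith)
        exact max_le ht4 (by nlinarith)
      have hM0 : (0:ℝ) ≤ max (α * 0) (max (β * 0)
          (max (0 * (infDist (g y) (F x)) ^ (p / 2))
           (max ((infDist (g y) (F x)) ^ (p / 2) * (infDist (f x) (G y)) ^ (p / 2))
            ((0 + 0) / 2)))) := le_max_of_le_left (by nlinarith)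
      have hdp : (dist (f x) (g y)) ^ p ≤ D ^ p :=
        Real.rpow_le_rpow dist_nonneg hdxy (le_of_lt hp0)
      set M := max (α * 0) (max (β * 0)
          (max (0 * (infDist (g y) (F x)) ^ (p / 2))
           (max ((infDist (g y) (F x)) ^ (p / 2) * (infDist (f x) (G y)) ^ (p / 2))
            ((0 + 0) / 2)))) with hMdef
      have hdn : (0:ℝ) ≤ (dist (f x) (g y)) ^ p := Real.rpow_nonneg dist_nonneg _
      have h1a : (0:ℝ) ≤ 1 - a := by linarith
      have harg0 : (0:ℝ) ≤ a * (dist (f x) (g y)) ^ p + (1 - a) * M := by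
        have := mul_nonneg ha0.le hdn
        have := mul_nonneg h1a hM0
        linarith
      have harg : a * (dist (f x) (g y)) ^ p + (1 - a) * M ≤ D ^ p := by
        have e1 : a * (dist (f x) (g y)) ^ p ≤ a * D ^ p :=
          mul_le_mul_of_nonneg_left hdp ha0.le
        have e2 : (1 - a) * M ≤ (1 - a) * D ^ p := mul_le_mul_of_nonneg_left hM h1a
        nlinarith
      have hmono := hΨmono _ _ harg0 harg
      have hlt := hΨ _ hDp
      linarith
    intro z hz z' hz'
    have := hdle z hz z' hz'
    rw [hDzero] at this
    exact dist_le_zero.mp this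
  -- build the common fixed point
  obtain ⟨u, hu1, hu2⟩ := howc1
  obtain ⟨v, hv1, hv2⟩ := howc2
  have k1 := key u v hu1 hv1
  have huv : f u = g v := k1 _ hu1 _ hv1
  set w := f u with hw
  have hwGv : w ∈ G v := huv ▸ hv1
  have hfwFw : f w ∈ F w := hu2 ⟨f u, hu1, rfl⟩
  have hgwGw : g w ∈ G w := by
    rw [huv]
    exact hv2 ⟨g v, hv1, rfl⟩
  have k2 := key w v hfwFw hv1
  have hfw : f w = w := k2 _ hfwFw _ hwGv
  have hwFw : w ∈ F w := by have h := hfwFw; rw [hfw] at h; exact h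
  have k3 := key u w hu1 hgwGw
  have hgw : g w = w := (k3 _ hu1 _ hgwGw).symm
  have hwGw : w ∈ G w := by have h := hgwGw; rw [hgw] at h; exact h
  refine ⟨w, ⟨hfw, hgw, hwFw, hwGw⟩, ?_⟩
  rintro w' ⟨hfw', hgw', hw'F, hw'G⟩
  exact (key w w' hfwFw (by rw [hgw']; exact hw'G) _ hwFw _ hw'G).symm
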